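/- Let A be an n×n real matrix, B an n×m real matrix, β > 0, q a positive natural number, 0 < a ≤ ā, and let 0 < ᾱ₁ < ᾱ₂ < … < ᾱ_J (J ≥ 1). Let 0 = ℏ₀ < ℏ₁ < … < ℏ_L be real numbers (L ≥ 1) and set Δ = max_{l∈{1,…,L}} (ℏ_l − ℏ_{l−1}). Let V : ℝⁿ → ℝ satisfy a‖x‖∞^q ≤ V(x) ≤ ā‖x‖∞^q for all x ∈ ℝⁿ. Suppose (x_k)_{k∈ℕ} in ℝⁿ, (û_k)_{k∈ℕ} in ℝᵐ, (L_k)_{k∈ℕ} with L_k ∈ {1,…,L} (given by a scheduler), and (j_k)_{k∈ℕ} with j_k ∈ {1,…,J} satisfy, for every k: ‖û_k‖∞ ≤ β‖x_k‖∞; V(exp(ℏ_l A)·x_k + (∫₀^{ℏ_l} exp(sA) ds)·B·û_k) ≤ e^{−ᾱ_{j_k} q ℏ_l}·V(x_k) for every l ∈ {1,…,L_k}; and x_{k+1} = exp(ℏ_{L_k} A)·x_k + (∫₀^{ℏ_{L_k}} exp(sA) ds)·B·û_k. Define t₀ = 0, t_{k+1} = t_k + ℏ_{L_k}, and x : [0,∞)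 → ℝⁿ by x(t) = exp((t−t_k)A)·x_k + (∫₀^{t−t_k} exp(sA) ds)·B·û_k for t ∈ [t_k, t_{k+1}), k ∈ ℕ. Then for all t ≥ 0, ‖x(t)‖∞ ≤ c·e^{−ᾱ₁ t}·‖x_0‖∞, where c = (ā/a)^{1/q}·(e^{‖A‖∞ Δ} + β·e^{ᾱ₁(ℏ_L − Δ)}·(∫₀^{Δ} e^{‖A‖∞ s} ds)·‖B‖∞)·e^{ᾱ₁ Δ}. -/

import Mathlib

open Matrix

attribute [local instance] Matrix.linftyOpNormedAddCommGroup Matrix.linftyOpNormedRing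
  Matrix.linftyOpNormedAlgebra

/-- Matrix exponential `exp (t • A)` of a square real matrix. -/
noncomputable def mexp {n : ℕ} (t : ℝ) (A : Matrix (Fin n) (Fin n) ℝ) :
    Matrix (Fin n) (Fin n) ℝ :=
  NormedSpace.exp (t • A)

/-- Entrywise integral `∫₀ʰ exp (s • A) ds` of the matrix exponential. -/
noncomputable def mint {n : ℕ} (h : ℝ) (A : Matrix (Fin n) (Fin n) ℝ) :
    Matrix (Fin n) (Fin n) ℝ :=
  Matrix.of fun i j => ∫ s in (0:ℝ)..h, mexp s A i j

lemma mexp_entry_cont {n : ℕ} (A : Matrix (Fin n) (Fin n) ℝ) (i j : Fin n) :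
    Continuous fun s : ℝ => mexp s A i j := by
  have h1 : Continuous fun s : ℝ => mexp s A :=
    NormedSpace.exp_continuous.comp (continuous_id.smul continuous_const)
  have h2 : Continuous fun M : Matrix (Fin n) (Fin n) ℝ => M i j := by
    have : (fun M : Matrix (Fin n) (Fin n) ℝ => M i j) =
        (LinearMap.proj j ∘ₗ (LinearMap.proj (φ := fun _ : Fin n => Fin n → ℝ) i) :
          Matrix (Fin n) (Fin n) ℝ →ₗ[ℝ] ℝ) := rfl
    rw [this]
    exact LinearMap.continuous_of_finiteDimensional _
  exact h2.comp h1

lemma mexp_ii {n : ℕ} (A : Matrix (Fin n) (Fin n) ℝ) (i j : Fin n) (a b : ℝ) :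
    IntervalIntegrable (fun s : ℝ => mexp s A i j) MeasureTheory.volume a b :=
  (mexp_entry_cont A i j).intervalIntegrable a b

lemma mexp_zero {n : ℕ} (A : Matrix (Fin n) (Fin n) ℝ) : mexp 0 A = 1 := by
  simp [mexp, NormedSpace.exp_zero]

lemma mexp_add {n : ℕ} (A : Matrix (Fin n) (Fin n) ℝ) (r s : ℝ) :
    mexp (r + s) A = mexp s A * mexp r A := by
  rw [mexp, add_smul, add_comm]
  exact NormedSpace.exp_add_of_commute (Commute.smul_left (Commute.smul_right rfl r) s)

lemma mint_zero {n : ℕ} (A : Matrix (Fin n) (Fin n) ℝ) : mint 0 A = 0 := by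
  ext i j
  simp [mint]

lemma mint_add {n : ℕ} (A : Matrix (Fin n) (Fin n) ℝ) (r s : ℝ) :
    mint (r + s) A = mint s A + mexp s A * mint r A := by
  ext i j
  have hsplit : (∫ σ in (0:ℝ)..(r + s), mexp σ A i j) =
      (∫ σ in (0:ℝ)..s, mexp σ A i j) + ∫ σ in s..(r + s), mexp σ A i j :=
    (intervalIntegral.integral_add_adjacent_intervals (mexp_ii A i j 0 s)
      (mexp_ii A i j s (r + s))).symm
  have hshift : (∫ σ in s..(r + s), mexp σ A i j) =
      ∫ σ in (0:ℝ)..r, mexp (σ + s) A i j := by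
    rw [intervalIntegral.integral_comp_add_right (fun u => mexp u A i j) s]
    norm_num [add_comm]
  have hmul : (∫ σ in (0:ℝ)..r, mexp (σ + s) A i j) =
      ∑ k : Fin n, mexp s A i k * ∫ σ in (0:ℝ)..r, mexp σ A k j := by
    have : ∀ σ : ℝ, mexp (σ + s) A i j = ∑ k : Fin n, mexp s A i k * mexp σ A k j := by
      intro σ
      rw [mexp_add]
      rfl
    simp_rw [this]
    rw [intervalIntegral.integral_finset_sum]
    · exact Finset.sum_congr rfl fun k _ => intervalIntegral.integral_const_mul _ _
    · exact fun k _ => (mexp_ii A k j 0 r).const_mul _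
  show (∫ σ in (0:ℝ)..(r + s), mexp σ A i j) = _
  rw [hsplit, hshift, hmul]
  rfl
lemma matnorm_one_le {n : ℕ} : ‖(1 : Matrix (Fin n) (Fin n) ℝ)‖ ≤ 1 := by
  rcases Nat.eq_zero_or_pos n with h | h
  · subst h
    rw [Subsingleton.elim (1 : Matrix (Fin 0) (Fin 0) ℝ) 0, norm_zero]
    norm_num
  · haveI : Nonempty (Fin n) := ⟨⟨0, h⟩⟩
    exact le_of_eq (Matrix.linfty_opNormOneClass.norm_one)

lemma matnorm_pow_le {n : ℕ} (M : Matrix (Fin n) (Fin n) ℝ) (k : ℕ) :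
    ‖M ^ k‖ ≤ ‖M‖ ^ k := by
  cases k with
  | zero => rw [pow_zero, pow_zero]; exact matnorm_one_le
  | succ k =>
    induction k with
    | zero => simp
    | succ k ih =>
      rw [pow_succ, pow_succ]
      exact (norm_mul_le _ _).trans (mul_le_mul_of_nonneg_right ih (norm_nonneg M))

lemma norm_nexp_le {n : ℕ} (M : Matrix (Fin n) (Fin n) ℝ) :
    ‖NormedSpace.exp M‖ ≤ Real.exp ‖M‖ := by
  rw [NormedSpace.exp_eq_tsum ℝ]
  have hs : Summable fun k : ℕ => ‖((Nat.factorial k : ℝ))⁻¹ • M ^ k‖ :=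
    NormedSpace.norm_expSeries_summable' M
  refine (norm_tsum_le_tsum_norm hs).trans ?_
  rw [Real.exp_eq_exp_ℝ, NormedSpace.exp_eq_tsum ℝ]
  have hs2 : Summable fun k : ℕ => ((Nat.factorial k : ℝ))⁻¹ • ‖M‖ ^ k := by
    have := NormedSpace.norm_expSeries_summable' (𝕂 := ℝ) ‖M‖
    simpa [norm_smul, Real.norm_eq_abs, abs_of_nonneg (pow_nonneg (norm_nonneg M) _)] using this
  refine Summable.tsum_le_tsum (fun k => ?_) hs hs2
  rw [norm_smul, smul_eq_mul]
  simp only [norm_inv, Real.norm_natCast]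
  exact mul_le_mul_of_nonneg_left (matnorm_pow_le M k) (by positivity)

lemma norm_mexp_le {n : ℕ} (A : Matrix (Fin n) (Fin n) ℝ) {s : ℝ} (hs : 0 ≤ s) :
    ‖mexp s A‖ ≤ Real.exp (‖A‖ * s) := by
  refine (norm_nexp_le _).trans ?_
  rw [norm_smul, Real.norm_eq_abs, abs_of_nonneg hs, mul_comm]

lemma norm_mexp_mulVec_le {n : ℕ} (A : Matrix (Fin n) (Fin n) ℝ) {s : ℝ} (hs : 0 ≤ s)
    (v : Fin n → ℝ) : ‖mexp s A *ᵥ v‖ ≤ Real.exp (‖A‖ * s) * ‖v‖ :=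
  (Matrix.linfty_opNorm_mulVec _ _).trans
    (mul_le_mul_of_nonneg_right (norm_mexp_le A hs) (norm_nonneg v))

lemma norm_mint_mulVec_le {n : ℕ} (A : Matrix (Fin n) (Fin n) ℝ) {h : ℝ} (hh : 0 ≤ h)
    (v : Fin n → ℝ) :
    ‖mint h A *ᵥ v‖ ≤ (∫ σ in (0:ℝ)..h, Real.exp (‖A‖ * σ)) * ‖v‖ := by
  have hRHS : 0 ≤ (∫ σ in (0:ℝ)..h, Real.exp (‖A‖ * σ)) * ‖v‖ := by
    apply mul_nonneg _ (norm_nonneg v)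
    apply intervalIntegral.integral_nonneg hh
    intro σ _
    positivity
  refine (pi_norm_le_iff_of_nonneg hRHS).2 fun i => ?_
  have hentry : (mint h A *ᵥ v) i = ∫ σ in (0:ℝ)..h, (mexp σ A *ᵥ v) i := by
    show ∑ j, mint h A i j * v j = _
    simp only [mint, Matrix.of_apply]
    rw [← Finset.sum_congr rfl fun j _ => intervalIntegral.integral_mul_const (v j) _,
      ← intervalIntegral.integral_finset_sum (fun j _ => (mexp_ii A i j 0 h).mul_const _)]
    rfl
  rw [Real.norm_eq_abs, hentry]
  have hcont : ∀ j, Continuous fun σ : ℝ => (mexp σ A *ᵥ v) j := by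
    intro j
    have : (fun σ : ℝ => (mexp σ A *ᵥ v) j) = fun σ => ∑ k, mexp σ A j k * v k := rfl
    rw [this]
    exact continuous_finset_sum _ fun k _ => (mexp_entry_cont A j k).mul continuous_const
  calc |∫ σ in (0:ℝ)..h, (mexp σ A *ᵥ v) i|
      ≤ ∫ σ in (0:ℝ)..h, ‖(mexp σ A *ᵥ v) i‖ := by
        simpa using intervalIntegral.norm_integral_le_integral_norm (f := fun σ => (mexp σ A *ᵥ v) i) hh
    _ ≤ ∫ σ in (0:ℝ)..h, Real.exp (‖A‖ * σ) * ‖v‖ := by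
        apply intervalIntegral.integral_mono_on hh
        · exact (((hcont i).norm).intervalIntegrable 0 h)
        · exact ((Real.continuous_exp.comp (continuous_const.mul continuous_id)).mul
            continuous_const).intervalIntegrable 0 h
        · intro σ hσ
          exact (norm_le_pi_norm _ i).trans (norm_mexp_mulVec_le A hσ.1 v)
    _ = (∫ σ in (0:ℝ)..h, Real.exp (‖A‖ * σ)) * ‖v‖ := intervalIntegral.integral_mul_const _ _

set_option maxHeartbeats 2000000 in
/-- Theorem 2: any trajectory generated by the anytime attention control law
(the scheduler prescribes the interexecution time `ℏ_{L_k}` and the controller achieves the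
Lyapunov decrease with some local rate `ᾱ_{j_k} ∈ {ᾱ₁,…,ᾱ_J}` at all intermediate times)
is GES with at least the rate `ᾱ₁` and the stated gain. -/
theorem aac_implies_GES {n m : ℕ} (A : Matrix (Fin n) (Fin n) ℝ) (B : Matrix (Fin n) (Fin m) ℝ)
    (β a abar Δ : ℝ) (q L J : ℕ) (ℏ : ℕ → ℝ) (ᾱ : ℕ → ℝ) (V : (Fin n → ℝ) → ℝ)
    (hβ : 0 < β) (hq : 0 < q) (ha : 0 < a) (hab : a ≤ abar) (hL : 1 ≤ L) (hJ : 1 ≤ J)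
    (hᾱ1 : 0 < ᾱ 1) (hᾱmono : ∀ j, 1 ≤ j → j < J → ᾱ j < ᾱ (j + 1))
    (hℏ0 : ℏ 0 = 0) (hℏmono : ∀ l, l < L → ℏ l < ℏ (l + 1))
    (hΔub : ∀ l, 1 ≤ l → l ≤ L → ℏ l - ℏ (l - 1) ≤ Δ)
    (hΔmem : ∃ l, 1 ≤ l ∧ l ≤ L ∧ Δ = ℏ l - ℏ (l - 1))
    (hVlow : ∀ x : Fin n → ℝ, a * ‖x‖ ^ q ≤ V x)
    (hVup : ∀ x : Fin n → ℝ, V x ≤ abar * ‖x‖ ^ q)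
    (xs : ℕ → Fin n → ℝ) (us : ℕ → Fin m → ℝ) (Lk : ℕ → ℕ) (jk : ℕ → ℕ)
    (hLk : ∀ k, 1 ≤ Lk k ∧ Lk k ≤ L)
    (hjk : ∀ k, 1 ≤ jk k ∧ jk k ≤ J)
    (hu : ∀ k, ‖us k‖ ≤ β * ‖xs k‖)
    (hdec : ∀ k, ∀ l, 1 ≤ l → l ≤ Lk k →
      V (mexp (ℏ l) A *ᵥ xs k + mint (ℏ l) A *ᵥ (B *ᵥ us k)) ≤
        Real.exp (-(ᾱ (jk k) * (q : ℝ) * ℏ l)) * V (xs k))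
    (hstep : ∀ k, xs (k + 1) = mexp (ℏ (Lk k)) A *ᵥ xs k + mint (ℏ (Lk k)) A *ᵥ (B *ᵥ us k))
    (tk : ℕ → ℝ) (htk0 : tk 0 = 0) (htkstep : ∀ k, tk (k + 1) = tk k + ℏ (Lk k))
    (x : ℝ → Fin n → ℝ)
    (hx : ∀ (k : ℕ) (t : ℝ), t ∈ Set.Ico (tk k) (tk (k + 1)) →
      x t = mexp (t - tk k) A *ᵥ xs k + mint (t - tk k) A *ᵥ (B *ᵥ us k)) :
    ∀ t : ℝ, 0 ≤ t →
      ‖x t‖ ≤ (abar / a) ^ (1 / (q : ℝ)) *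
        (Real.exp (‖A‖ * Δ) + β * Real.exp (ᾱ 1 * (ℏ L - Δ)) *
          (∫ s in (0:ℝ)..Δ, Real.exp (‖A‖ * s)) * ‖B‖) *
        Real.exp (ᾱ 1 * Δ) * Real.exp (-(ᾱ 1 * t)) * ‖xs 0‖ := by

  -- abbreviations
  intro t ht
  set α := ᾱ 1 with hαdef
  set C0 : ℝ := (abar / a) ^ (1 / (q : ℝ)) with hC0def
  set N0 : ℝ := ‖xs 0‖ with hN0def
  have hC0pos : 0 < C0 := Real.rpow_pos_of_pos (div_pos (lt_of_lt_of_le ha hab) ha) _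
  have hC0q : C0 ^ q = abar / a := by
    rw [hC0def, ← Real.rpow_natCast ((abar / a) ^ (1 / (q : ℝ))) q,
      ← Real.rpow_mul (le_of_lt (div_pos (lt_of_lt_of_le ha hab) ha)), one_div,
      inv_mul_cancel₀ (by exact_mod_cast hq.ne' : (q : ℝ) ≠ 0), Real.rpow_one]
  -- monotonicity of ℏ on [0, L]
  have hℏle : ∀ j, j ≤ L → ∀ i, i ≤ j → ℏ i ≤ ℏ j := by
    intro j
    induction j with
    | zero => intro _ i hi; rw [Nat.le_zero.mp hi]
    | succ j ih =>
      intro hjL i hi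
      rcases Nat.eq_or_lt_of_le hi with h | h
      · rw [h]
      · exact (ih (by omega) i (by omega)).trans (le_of_lt (hℏmono j (by omega)))
  have hℏnonneg : ∀ l, l ≤ L → 0 ≤ ℏ l := fun l hl => hℏ0 ▸ hℏle l hl 0 (Nat.zero_le _)
  have hℏ1pos : 0 < ℏ 1 := by have := hℏmono 0 (by omega); rwa [hℏ0] at this
  -- monotonicity of ᾱ
  have hα1le : ∀ j, 1 ≤ j → j ≤ J → α ≤ ᾱ j := by
    intro j
    induction j with
    | zero => omega
    | succ j ih =>
      intro _ hjJ
      rcases Nat.eq_zero_or_pos j with h | h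
      · rw [h]
      · exact (ih h (by omega)).trans (le_of_lt (hᾱmono j h (by omega)))
  -- V is nonneg
  have hVnonneg : ∀ y : Fin n → ℝ, 0 ≤ V y := fun y =>
    le_trans (by positivity) (hVlow y)
  -- tk is nonneg and increasing
  have htknn : ∀ k, 0 ≤ tk k := by
    intro k
    induction k with
    | zero => rw [htk0]
    | succ k ih => rw [htkstep]; have := hℏnonneg (Lk k) (hLk k).2; linarith
  -- discrete Lyapunov decay
  have hVk : ∀ k, V (xs k) ≤ Real.exp (-(α * q * tk k)) * V (xs 0) := by
    intro k
    induction k with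
    | zero => rw [htk0]; simp
    | succ k ih =>
      have hd := hdec k (Lk k) (hLk k).1 le_rfl
      rw [← hstep k] at hd
      have hαle : α ≤ ᾱ (jk k) := hα1le (jk k) (hjk k).1 (hjk k).2
      have hexp : Real.exp (-(ᾱ (jk k) * q * ℏ (Lk k))) ≤ Real.exp (-(α * q * ℏ (Lk k))) := by
        apply Real.exp_le_exp.2
        have hqpos : (0:ℝ) ≤ (q:ℝ) := by positivity
        have hh := hℏnonneg (Lk k) (hLk k).2
        nlinarith [mul_le_mul_of_nonneg_right (mul_le_mul_of_nonneg_right hαle hqpos) hh]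
      calc V (xs (k + 1)) ≤ Real.exp (-(ᾱ (jk k) * q * ℏ (Lk k))) * V (xs k) := hd
        _ ≤ Real.exp (-(α * q * ℏ (Lk k))) * V (xs k) :=
            mul_le_mul_of_nonneg_right hexp (hVnonneg _)
        _ ≤ Real.exp (-(α * q * ℏ (Lk k))) * (Real.exp (-(α * q * tk k)) * V (xs 0)) :=
            mul_le_mul_of_nonneg_left ih (Real.exp_nonneg _)
        _ = Real.exp (-(α * q * tk (k + 1))) * V (xs 0) := by
            rw [← mul_assoc, ← Real.exp_add, htkstep]; ring_nf
  -- from a V-bound to a norm bound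
  have key : ∀ (y : Fin n → ℝ) (τ : ℝ), V y ≤ Real.exp (-(α * q * τ)) * V (xs 0) →
      ‖y‖ ≤ C0 * Real.exp (-(α * τ)) * N0 := by
    intro y τ hVy
    have h1 : a * ‖y‖ ^ q ≤ Real.exp (-(α * q * τ)) * (abar * N0 ^ q) :=
      (hVlow y).trans (hVy.trans (mul_le_mul_of_nonneg_left (hVup (xs 0)) (Real.exp_nonneg _)))
    have h2 : ‖y‖ ^ q ≤ (C0 * Real.exp (-(α * τ)) * N0) ^ q := by
      have hrhs : (C0 * Real.exp (-(α * τ)) * N0) ^ q =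
          (abar / a) * Real.exp (-(α * q * τ)) * N0 ^ q := by
        rw [mul_pow, mul_pow, hC0q, ← Real.exp_nat_mul]
        ring_nf
      rw [hrhs]
      rw [← sub_nonneg] at h1 ⊢
      have : (abar / a) * Real.exp (-(α * q * τ)) * N0 ^ q - ‖y‖ ^ q =
          (Real.exp (-(α * q * τ)) * (abar * N0 ^ q) - a * ‖y‖ ^ q) / a := by
        field_simp
      rw [this]
      exact div_nonneg (by linarith) (le_of_lt ha)
    exact le_of_pow_le_pow_left₀ hq.ne' (by positivity) h2
  -- locate the interval [tk k, tk (k+1)) containing t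
  have hP : ∃ k, t < tk (k + 1) := by
    have htklb : ∀ k : ℕ, (k : ℝ) * ℏ 1 ≤ tk k := by
      intro k
      induction k with
      | zero => simp [htk0]
      | succ k ih =>
        rw [htkstep]
        push_cast
        have h1 : ℏ 1 ≤ ℏ (Lk k) := hℏle (Lk k) (hLk k).2 1 (hLk k).1
        nlinarith
    obtain ⟨N, hN⟩ := exists_nat_gt (t / ℏ 1)
    refine ⟨N, ?_⟩
    have h1 : t < N * ℏ 1 := by rwa [div_lt_iff₀ hℏ1pos] at hN
    have h2 : tk N ≤ tk (N + 1) := by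
      rw [htkstep]; have := hℏnonneg (Lk N) (hLk N).2; linarith
    exact h1.trans_le ((htklb N).trans h2)
  set k := Nat.find hP with hkdef
  have ht2 : t < tk (k + 1) := Nat.find_spec hP
  have ht1 : tk k ≤ t := by
    rcases Nat.eq_zero_or_pos k with h | h
    · rw [h, htk0]; exact ht
    · have := Nat.find_min hP (m := k - 1) (by omega)
      push_neg at this
      have hkk : k - 1 + 1 = k := by omega
      rwa [hkk] at this
  set τ := t - tk k with hτdef
  have hτ0 : 0 ≤ τ := by simp [hτdef]; linarith
  have hτu : τ < ℏ (Lk k) := by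
    have := htkstep k
    simp only [hτdef]
    linarith [ht2.trans_le (le_of_eq (htkstep k))]
  -- locate the subinterval [ℏ l0, ℏ (l0+1)) containing τ
  have hQ : ∃ l0, τ < ℏ (l0 + 1) := by
    refine ⟨Lk k - 1, ?_⟩
    have h1 := (hLk k).1
    have : Lk k - 1 + 1 = Lk k := by omega
    rwa [this]
  set l0 := Nat.find hQ with hl0def
  have hτub : τ < ℏ (l0 + 1) := Nat.find_spec hQ
  have hl0u : l0 ≤ Lk k - 1 := by
    apply Nat.find_le
    have h1 := (hLk k).1
    have : Lk k - 1 + 1 = Lk k := by omega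
    rwa [this]
  have hlLk : l0 + 1 ≤ Lk k := by have := (hLk k).1; omega
  have hlL : l0 + 1 ≤ L := hlLk.trans (hLk k).2
  have hτl : ℏ l0 ≤ τ := by
    rcases Nat.eq_zero_or_pos l0 with h | h
    · rw [h, hℏ0]; exact hτ0
    · have := Nat.find_min hQ (m := l0 - 1) (by omega)
      push_neg at this
      have hll : l0 - 1 + 1 = l0 := by omega
      rwa [hll] at this
  set r := ℏ l0 with hrdef
  set s := τ - ℏ l0 with hsdef
  have hr0 : 0 ≤ r := hℏnonneg l0 (by omega)
  have hs0 : 0 ≤ s := by simp [hsdef]; linarith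
  have hsΔ : s ≤ Δ := by
    have h1 : ℏ (l0 + 1) - ℏ ((l0 + 1) - 1) ≤ Δ := hΔub (l0 + 1) (by omega) hlL
    have h2 : (l0 + 1) - 1 = l0 := by omega
    rw [h2] at h1
    simp only [hsdef, hrdef]
    linarith
  have hrsL : r + s ≤ ℏ L := by
    have h1 : ℏ (l0 + 1) ≤ ℏ L := hℏle L le_rfl (l0 + 1) hlL
    simp only [hrdef, hsdef]
    linarith
  set w := B *ᵥ us k with hwdef
  set y := mexp r A *ᵥ xs k + mint r A *ᵥ w with hydef
  -- trajectory formula on the subinterval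
  have hxt : x t = mexp s A *ᵥ y + mint s A *ᵥ w := by
    have hform := hx k t ⟨ht1, ht2⟩
    have hτrs : t - tk k = r + s := by simp [hrdef, hsdef, hτdef]
    rw [hform, hτrs, mexp_add, mint_add, hydef]
    simp only [Matrix.add_mulVec, ← Matrix.mulVec_mulVec, Matrix.mulVec_add]
    abel
  -- Lyapunov bound at the left endpoint of the subinterval
  have hVy : V y ≤ Real.exp (-(α * q * (tk k + r))) * V (xs 0) := by
    rcases Nat.eq_zero_or_pos l0 with h | h
    · have hy : y = xs k := by
        rw [hydef, hrdef, h, hℏ0, mexp_zero, mint_zero, Matrix.one_mulVec,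
          Matrix.zero_mulVec, add_zero]
      rw [hy]
      have : tk k + r = tk k := by rw [hrdef, h, hℏ0, add_zero]
      rw [this]
      exact hVk k
    · have hd := hdec k l0 h (by omega)
      rw [← hwdef, ← hydef, ← hrdef] at hd
      have hαle : α ≤ ᾱ (jk k) := hα1le (jk k) (hjk k).1 (hjk k).2
      have hexp : Real.exp (-(ᾱ (jk k) * q * r)) ≤ Real.exp (-(α * q * r)) := by
        apply Real.exp_le_exp.2
        have hqpos : (0:ℝ) ≤ (q:ℝ) := by positivity
        nlinarith [mul_le_mul_of_nonneg_right (mul_le_mul_of_nonneg_right hαle hqpos) hr0]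
      calc V y ≤ Real.exp (-(ᾱ (jk k) * q * r)) * V (xs k) := hd
        _ ≤ Real.exp (-(α * q * r)) * V (xs k) :=
            mul_le_mul_of_nonneg_right hexp (hVnonneg _)
        _ ≤ Real.exp (-(α * q * r)) * (Real.exp (-(α * q * tk k)) * V (xs 0)) :=
            mul_le_mul_of_nonneg_left (hVk k) (Real.exp_nonneg _)
        _ = Real.exp (-(α * q * (tk k + r))) * V (xs 0) := by
            rw [← mul_assoc, ← Real.exp_add]; ring_nf
  have hny : ‖y‖ ≤ C0 * Real.exp (-(α * (tk k + r))) * N0 := key y (tk k + r) hVy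
  have hnxk : ‖xs k‖ ≤ C0 * Real.exp (-(α * tk k)) * N0 := key (xs k) (tk k) (hVk k)
  have hnw : ‖w‖ ≤ ‖B‖ * (β * ‖xs k‖) := by
    refine (Matrix.linfty_opNorm_mulVec _ _).trans ?_
    exact mul_le_mul_of_nonneg_left (hu k) (norm_nonneg B)
  -- integral bounds
  set Is := ∫ σ in (0:ℝ)..s, Real.exp (‖A‖ * σ) with hIsdef
  set IΔ := ∫ σ in (0:ℝ)..Δ, Real.exp (‖A‖ * σ) with hIΔdef
  have hIexp : ∀ u v : ℝ, IntervalIntegrable (fun σ => Real.exp (‖A‖ * σ))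
      MeasureTheory.volume u v := fun u v =>
    ((Real.continuous_exp.comp (continuous_const.mul continuous_id)).intervalIntegrable u v)
  have hIs0 : 0 ≤ Is :=
    intervalIntegral.integral_nonneg hs0 fun σ _ => Real.exp_nonneg _
  have hIsΔ : Is ≤ IΔ := by
    have hsplit : IΔ = Is + ∫ σ in s..Δ, Real.exp (‖A‖ * σ) := by
      rw [hIΔdef, hIsdef,
        intervalIntegral.integral_add_adjacent_intervals (hIexp 0 s) (hIexp s Δ)]
    have hpos : 0 ≤ ∫ σ in s..Δ, Real.exp (‖A‖ * σ) :=
      intervalIntegral.integral_nonneg hsΔ fun σ _ => Real.exp_nonneg _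
    linarith
  have hIΔ0 : 0 ≤ IΔ := hIs0.trans hIsΔ
  -- time decomposition
  have httkrs : t = tk k + r + s := by linarith [hτdef, hsdef]
  have hN0nn : 0 ≤ N0 := norm_nonneg _
  -- first term
  have key1 : Real.exp (‖A‖ * s) * ‖y‖ ≤
      C0 * Real.exp (‖A‖ * Δ) * Real.exp (α * Δ) * Real.exp (-(α * t)) * N0 := by
    have heq : Real.exp (-(α * (tk k + r))) = Real.exp (α * s) * Real.exp (-(α * t)) := by
      rw [← Real.exp_add]; congr 1; rw [httkrs]; ring
    calc Real.exp (‖A‖ * s) * ‖y‖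
        ≤ Real.exp (‖A‖ * s) * (C0 * Real.exp (-(α * (tk k + r))) * N0) :=
          mul_le_mul_of_nonneg_left hny (Real.exp_nonneg _)
      _ = C0 * Real.exp (‖A‖ * s) * Real.exp (α * s) * Real.exp (-(α * t)) * N0 := by
          rw [heq]; ring
      _ ≤ C0 * Real.exp (‖A‖ * Δ) * Real.exp (α * Δ) * Real.exp (-(α * t)) * N0 := by
          have h1 : Real.exp (‖A‖ * s) ≤ Real.exp (‖A‖ * Δ) :=
            Real.exp_le_exp.2 (mul_le_mul_of_nonneg_left hsΔ (norm_nonneg A))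
          have h2 : Real.exp (α * s) ≤ Real.exp (α * Δ) :=
            Real.exp_le_exp.2 (mul_le_mul_of_nonneg_left hsΔ (le_of_lt hᾱ1))
          gcongr
  -- second term
  have key2 : Is * ‖w‖ ≤
      C0 * (β * Real.exp (α * (ℏ L - Δ)) * IΔ * ‖B‖) * Real.exp (α * Δ) *
        Real.exp (-(α * t)) * N0 := by
    have hxkb : ‖w‖ ≤ ‖B‖ * (β * (C0 * Real.exp (-(α * tk k)) * N0)) := by
      refine hnw.trans ?_
      exact mul_le_mul_of_nonneg_left
        (mul_le_mul_of_nonneg_left hnxk (le_of_lt hβ)) (norm_nonneg B)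
    have heq2 : Real.exp (-(α * tk k)) = Real.exp (α * (r + s)) * Real.exp (-(α * t)) := by
      rw [← Real.exp_add]; congr 1; rw [httkrs]; ring
    have hexps : Real.exp (α * (r + s)) ≤ Real.exp (α * ℏ L) :=
      Real.exp_le_exp.2 (mul_le_mul_of_nonneg_left hrsL (le_of_lt hᾱ1))
    have hwnn : 0 ≤ ‖w‖ := norm_nonneg _
    calc Is * ‖w‖ ≤ IΔ * ‖w‖ := mul_le_mul_of_nonneg_right hIsΔ hwnn
      _ ≤ IΔ * (‖B‖ * (β * (C0 * Real.exp (-(α * tk k)) * N0))) :=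
          mul_le_mul_of_nonneg_left hxkb hIΔ0
      _ = C0 * (β * IΔ * ‖B‖) * Real.exp (α * (r + s)) * Real.exp (-(α * t)) * N0 := by
          rw [heq2]; ring
      _ ≤ C0 * (β * IΔ * ‖B‖) * Real.exp (α * ℏ L) * Real.exp (-(α * t)) * N0 := by
          have hnn : 0 ≤ C0 * (β * IΔ * ‖B‖) := by positivity
          have := mul_le_mul_of_nonneg_left hexps hnn
          nlinarith [Real.exp_nonneg (-(α * t)), mul_le_mul_of_nonneg_right
            (mul_le_mul_of_nonneg_left hexps hnn) (Real.exp_nonneg (-(α * t)))]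
      _ = C0 * (β * Real.exp (α * (ℏ L - Δ)) * IΔ * ‖B‖) * Real.exp (α * Δ) *
            Real.exp (-(α * t)) * N0 := by
          rw [show α * ℏ L = α * (ℏ L - Δ) + α * Δ by ring, Real.exp_add]; ring
  -- conclusion
  have hfinal : ‖x t‖ ≤ Real.exp (‖A‖ * s) * ‖y‖ + Is * ‖w‖ := by
    rw [hxt]
    refine (norm_add_le _ _).trans ?_
    have h1 : ‖mexp s A *ᵥ y‖ ≤ Real.exp (‖A‖ * s) * ‖y‖ := norm_mexp_mulVec_le A hs0 y
    have h2 : ‖mint s A *ᵥ w‖ ≤ Is * ‖w‖ := norm_mint_mulVec_le A hs0 w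
    linarith
  have hrhs : (abar / a) ^ (1 / (q : ℝ)) *
      (Real.exp (‖A‖ * Δ) + β * Real.exp (ᾱ 1 * (ℏ L - Δ)) *
        (∫ sσ in (0:ℝ)..Δ, Real.exp (‖A‖ * sσ)) * ‖B‖) *
      Real.exp (ᾱ 1 * Δ) * Real.exp (-(ᾱ 1 * t)) * ‖xs 0‖ =
      C0 * Real.exp (‖A‖ * Δ) * Real.exp (α * Δ) * Real.exp (-(α * t)) * N0 +
      C0 * (β * Real.exp (α * (ℏ L - Δ)) * IΔ * ‖B‖) * Real.exp (α * Δ) *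
        Real.exp (-(α * t)) * N0 := by
    rw [← hC0def, ← hαdef, ← hIΔdef, ← hN0def]; ring
  rw [hrhs]
  linarith
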